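/- arXiv:1905.08106 — 2 statements merged into one kernel-verified Lean document; each statement's English description precedes it below -/
import Mathlib

section
/- The topological solution v^top(t) = Σ_{k≥1} (1/k) Σ_{p_1+⋯+p_k=k-1} (t_{p_1}/p_1!)⋯(t_{p_k}/p_k!) satisfies the genus-zero Euler–Lagrange equation t_0 + Σ_{p≥1} (t_p − δ_{p,1}) · v^top(t)^p / p! = 0 in ℂ[[t_0, t_1, …]]. -/
noncomputable section
open scoped BigOperators

/-- The topological solution `v^top` of the Riemann hierarchy, as a formal power
series in `t_0, t_1, t_2, …`: `v^top = Σ_{k≥1} (1/k) Σ_{p_1+⋯+p_k=k-1} ∏ t_{p_i}/p_i!`,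
written coefficientwise. -/
def vtop : MvPowerSeries ℕ ℂ := fun m =>
  if 1 ≤ (m.sum fun _ n => n) ∧ (m.sum fun i n => i * n) + 1 = (m.sum fun _ n => n) then
    (((m.sum fun _ n => n) - 1).factorial : ℂ) /
      (m.prod fun i n => ((n.factorial : ℂ) * (i.factorial : ℂ) ^ n))
  else 0

/-- Partial derivative `∂/∂t_i` on formal power series in `t_0, t_1, …`. -/
def pd (i : ℕ) (f : MvPowerSeries ℕ ℂ) : MvPowerSeries ℕ ℂ := fun m =>
  ((m i : ℂ) + 1) * MvPowerSeries.coeff (m + Finsupp.single i 1) f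

/-- Restriction `t_0 = 0` of a formal power series. -/
def setZero (f : MvPowerSeries ℕ ℂ) : MvPowerSeries ℕ ℂ := fun m =>
  if m 0 = 0 then MvPowerSeries.coeff m f else 0

/-- `v^s_m := (∂_x^m v^top)|_{t_0=0}`, with `x = t_0`. -/
def vs (m : ℕ) : MvPowerSeries ℕ ℂ := setZero ((pd 0)^[m] vtop)

/-- The monomial `t_{μ+1} = ∏_{i ∈ μ} t_{i+1}` indexed by a multiset `μ`. -/
def tmon (μ : Multiset ℕ) : MvPowerSeries ℕ ℂ :=
  (μ.map fun i => (MvPowerSeries.X (i + 1) : MvPowerSeries ℕ ℂ)).prod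

/-- The monomial `v^s_{μ+1} = ∏_{i ∈ μ} v^s_{i+1}` indexed by a multiset `μ`. -/
def vsmon (μ : Multiset ℕ) : MvPowerSeries ℕ ℂ := (μ.map fun i => vs (i + 1)).prod

/-!
Read `v^top` as a generating function of plane trees. A list `L` of naturals is the Łukasiewicz
word of a forest of `j` plane trees (`IsWord j L`) if it lists the numbers of children of the
vertices in preorder. Give the letter `a` the weight `t_a / a!` and let `series j` be the total
weight of these words. Forest words factor uniquely into `j` tree words, so
`series j = (series 1) ^ j`; removing the root `a` of a tree word leaves a word of a forest of
`a` trees, so `series 1 = Σ_a t_a (series 1) ^ a / a!`, which is the Euler–Lagrange equation.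
Finally `series 1 = v^top`: by the cycle lemma exactly one of the `k` rotations of a list of
length `k` and sum `k - 1` is a tree word, so among the `k! / ∏ μ_i!` arrangements of the
letters of `t^μ` there are `(k - 1)! / ∏ μ_i!` tree words, each of weight `t^μ / ∏ i!^(μ_i)`.
-/

namespace MvPowerSeries

lemma coeff_X_mul {σ R : Type*} [Semiring R] (s : σ) (f : MvPowerSeries σ R) (μ : σ →₀ ℕ) :
    coeff μ (X s * f) = if Finsupp.single s 1 ≤ μ then coeff (μ - Finsupp.single s 1) f else 0 := by
  rw [X_def, coeff_monomial_mul, one_mul]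

end MvPowerSeries

namespace Lukasiewicz

open Finset Finsupp MvPowerSeries

def content (L : List ℕ) : ℕ →₀ ℕ := Multiset.toFinsupp L

@[simp]
lemma content_nil : content [] = 0 := by simp [content]

lemma content_append (L₁ L₂ : List ℕ) : content (L₁ ++ L₂) = content L₁ + content L₂ := by
  rw [content, ← Multiset.coe_add, Multiset.toFinsupp_add, content, content]

@[simp]
lemma content_cons (a : ℕ) (L : List ℕ) : content (a :: L) = single a 1 + content L := by
  rw [← List.singleton_append, content_append, content, Multiset.coe_singleton,
    Multiset.toFinsupp_singleton]

lemma content_rotate (L : List ℕ) (r : ℕ) : content (L.rotate r) = content L := by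
  rw [content, content, Multiset.coe_eq_coe.2 (L.rotate_perm r)]

lemma content_cons_eq_iff {a : ℕ} {L : List ℕ} {μ : ℕ →₀ ℕ} :
    content (a :: L) = μ ↔ a ∈ μ.support ∧ content L = μ - single a 1 := by
  rw [mem_support_iff, ← Nat.one_le_iff_ne_zero, ← single_le_iff, content_cons]
  constructor
  · rintro rfl
    simp
  · rintro ⟨ha, hL⟩
    rw [hL, add_tsub_cancel_of_le ha]

lemma degree_content (L : List ℕ) : (content L).degree = L.length := by
  induction L with
  | nil => simp
  | cons a L ih => simp [ih, add_comm]

lemma weight_content (L : List ℕ) : weight id (content L) = L.sum := by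
  induction L with
  | nil => simp
  | cons a L ih => simp [ih, weight_single]

lemma prod_content_pow {M : Type*} [CommMonoid M] (g : ℕ → M) (L : List ℕ) :
    (content L).prod (fun i n => g i ^ n) = (L.map g).prod := by
  induction L with
  | nil => simp
  | cons a L ih =>
    rw [content_cons, prod_add_index' (fun _ => pow_zero _) (fun _ _ _ => pow_add _ _ _),
      prod_single_index (h := fun i n => g i ^ n) (pow_zero _), ih, pow_one, List.map_cons,
      List.prod_cons]

def arrangements (μ : ℕ →₀ ℕ) : Finset (List ℕ) := (Multiset.lists (toMultiset μ)).toFinset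

@[simp]
lemma mem_arrangements {μ : ℕ →₀ ℕ} {L : List ℕ} : L ∈ arrangements μ ↔ content L = μ := by
  rw [arrangements, Multiset.mem_toFinset, Multiset.mem_lists_iff, Multiset.quot_mk_to_coe,
    content, Multiset.toFinsupp_eq_iff, eq_comm]

lemma arrangements_eq_biUnion {μ : ℕ →₀ ℕ} (hμ : μ ≠ 0) :
    arrangements μ =
      μ.support.biUnion fun a => (arrangements (μ - single a 1)).image (List.cons a) := by
  ext (_ | ⟨a, L⟩)
  · simp [Ne.symm hμ]
  · simp only [mem_arrangements, content_cons_eq_iff, mem_biUnion, mem_image, List.cons.injEq]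
    exact ⟨fun ⟨ha, hL⟩ => ⟨a, ha, L, hL, rfl, rfl⟩, fun ⟨_, hb, _, hL, hba, hL'⟩ =>
      hba ▸ hL' ▸ ⟨hb, hL⟩⟩

lemma pairwiseDisjoint_image_cons (s : Finset ℕ) (F : ℕ → Finset (List ℕ)) :
    (s : Set ℕ).PairwiseDisjoint fun a => (F a).image (List.cons a) := by
  intro a _ b _ hab
  simp only [Function.onFun, disjoint_left, mem_image]
  rintro _ ⟨L, -, rfl⟩ ⟨L', -, h⟩
  exact hab (List.cons.inj h).1.symm

lemma prod_factorial_eq_mul_prod_factorial {μ : ℕ →₀ ℕ} {a : ℕ} (ha : a ∈ μ.support) :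
    μ.prod (fun _ n => n.factorial) = μ a * (μ - single a 1).prod (fun _ n => n.factorial) := by
  have hpos : 0 < μ a := Nat.pos_of_ne_zero (mem_support_iff.1 ha)
  have herase : (μ - single a 1).erase a = μ.erase a := by
    ext i
    rcases eq_or_ne i a with rfl | hi <;> simp [*]
  rw [← mul_prod_erase' μ a _ (fun _ => rfl), ← mul_prod_erase' (μ - single a 1) a _ (fun _ => rfl),
    herase, ← mul_assoc, tsub_apply, single_eq_same, Nat.mul_factorial_pred hpos.ne']

lemma card_arrangements_mul_prod_factorial (μ : ℕ →₀ ℕ) :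
    #(arrangements μ) * μ.prod (fun _ n => n.factorial) = μ.degree.factorial := by
  induction h : μ.degree generalizing μ with
  | zero =>
    rw [degree_eq_zero_iff] at h
    subst h
    have : arrangements 0 = {[]} := by
      ext L
      rw [mem_arrangements, mem_singleton, ← degree_eq_zero_iff, degree_content,
        List.length_eq_zero_iff]
    simp [this]
  | succ k ih =>
    have hμ : μ ≠ 0 := by rintro rfl; simp at h
    have hdeg : ∀ a ∈ μ.support, (μ - single a 1).degree = k := by
      intro a ha
      have := congrArg degree (tsub_add_cancel_of_le (single_le_iff.2
        (Nat.one_le_iff_ne_zero.2 (mem_support_iff.1 ha))))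
      rw [map_add, degree_single, h] at this
      omega
    rw [arrangements_eq_biUnion hμ, card_biUnion (pairwiseDisjoint_image_cons _ _), Finset.sum_mul]
    calc ∑ a ∈ μ.support, #((arrangements (μ - single a 1)).image (List.cons a)) *
            μ.prod (fun _ n => n.factorial)
          = ∑ a ∈ μ.support, μ a * k.factorial := sum_congr rfl fun a ha => by
            rw [card_image_of_injective _ List.cons_injective,
              prod_factorial_eq_mul_prod_factorial ha, mul_left_comm, ih _ (hdeg a ha)]
        _ = (k + 1).factorial := by rw [← Finset.sum_mul, ← degree_apply, h, Nat.factorial_succ]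

inductive IsWord : ℕ → List ℕ → Prop
  | nil : IsWord 0 []
  | cons {a j : ℕ} {L : List ℕ} : IsWord (a + j) L → IsWord (j + 1) (a :: L)

lemma isWord_nil_iff {j : ℕ} : IsWord j [] ↔ j = 0 :=
  ⟨fun h => by cases h; rfl, fun h => h ▸ .nil⟩

lemma isWord_zero_iff {L : List ℕ} : IsWord 0 L ↔ L = [] :=
  ⟨fun h => by cases h; rfl, fun h => h ▸ .nil⟩

lemma isWord_succ_cons_iff {a j : ℕ} {L : List ℕ} : IsWord (j + 1) (a :: L) ↔ IsWord (a + j) L :=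
  ⟨fun h => by cases h; assumption, .cons⟩

lemma IsWord.length_eq {j : ℕ} {L : List ℕ} (h : IsWord j L) : L.length = L.sum + j := by
  induction h with
  | nil => rfl
  | cons _ ih => simp only [List.length_cons, List.sum_cons, ih]; omega

lemma IsWord.append {i j : ℕ} {L₁ L₂ : List ℕ} (h₁ : IsWord i L₁) (h₂ : IsWord j L₂) :
    IsWord (i + j) (L₁ ++ L₂) := by
  induction h₁ with
  | nil => simpa using h₂
  | @cons a i L _ ih =>
    rw [Nat.add_right_comm]
    exact .cons (by rw [← add_assoc]; exact ih)

lemma IsWord.exists_append {i j : ℕ} {L : List ℕ} (h : IsWord (i + j) L) :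
    ∃ L₁ L₂, IsWord i L₁ ∧ IsWord j L₂ ∧ L₁ ++ L₂ = L := by
  induction L generalizing i with
  | nil =>
    obtain ⟨rfl, rfl⟩ : i = 0 ∧ j = 0 := by simpa [isWord_nil_iff] using h
    exact ⟨[], [], .nil, .nil, rfl⟩
  | cons a L ih =>
    cases i with
    | zero => exact ⟨[], a :: L, .nil, by simpa using h, rfl⟩
    | succ i =>
      rw [Nat.add_right_comm, isWord_succ_cons_iff, ← add_assoc] at h
      obtain ⟨L₁, L₂, h₁, h₂, rfl⟩ := ih h
      exact ⟨a :: L₁, L₂, .cons h₁, h₂, rfl⟩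

lemma IsWord.append_inj {i : ℕ} {L₁ L₁' L₂ L₂' : List ℕ} (h : IsWord i L₁) (h' : IsWord i L₁')
    (heq : L₁ ++ L₂ = L₁' ++ L₂') : L₁ = L₁' ∧ L₂ = L₂' := by
  induction h generalizing L₁' with
  | nil =>
    cases h'
    exact ⟨rfl, by simpa using heq⟩
  | @cons a j L _ ih =>
    cases h' with
    | @cons a' _ L' h' =>
      simp only [List.cons_append, List.cons.injEq] at heq
      obtain ⟨rfl, heq⟩ := heq
      obtain ⟨rfl, rfl⟩ := ih h' heq
      exact ⟨rfl, rfl⟩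

lemma isWord_iff_prefix_sums {j : ℕ} {L : List ℕ} :
    IsWord j L ↔ (∀ m < L.length, m < (L.take m).sum + j) ∧ L.length = L.sum + j := by
  induction L generalizing j with
  | nil => simp [isWord_nil_iff, eq_comm]
  | cons a L ih =>
    cases j with
    | zero =>
      simp only [isWord_zero_iff, reduceCtorEq, false_iff, not_and]
      intro h
      simpa using h 0 (by simp)
    | succ j =>
      rw [isWord_succ_cons_iff, ih, List.length_cons, Nat.forall_lt_succ_left]
      simp only [List.take_succ_cons, List.sum_cons, List.take_zero, List.sum_nil]
      constructor
      · rintro ⟨hpre, hlen⟩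
        exact ⟨⟨by omega, fun m hm => by have := hpre m hm; omega⟩, by omega⟩
      · rintro ⟨⟨-, hpre⟩, hlen⟩
        exact ⟨fun m hm => by have := hpre m hm; omega, by omega⟩

def height (L : List ℕ) (n : ℕ) : ℤ := ((L ++ L).take n).sum - n

lemma height_add_length {L : List ℕ} {n : ℕ} (hn : n ≤ L.length) :
    height L (n + L.length) = height L n + L.sum - L.length := by
  rw [height, height, add_comm n, List.take_length_add_append, List.sum_append,
    List.take_append_of_le_length hn]
  push_cast
  ring

lemma sum_take_rotate {L : List ℕ} {r m : ℕ} (hr : r ≤ L.length) (hm : m ≤ L.length) :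
    ((L.rotate r).take m).sum + ((L ++ L).take r).sum = ((L ++ L).take (r + m)).sum := by
  have hrot : L.rotate r = ((L ++ L).drop r).take L.length := by
    rw [List.rotate_eq_drop_append_take hr, List.drop_append_of_le_length hr, List.take_append,
      List.take_of_length_le (l := L.drop r) (by simp), List.length_drop, Nat.sub_sub_self hr]
  rw [hrot, List.take_take, min_eq_left hm, List.take_add, List.sum_append, add_comm]

lemma isWord_one_rotate_iff {L : List ℕ} (hL : L.length = L.sum + 1) {r : ℕ} (hr : r ≤ L.length) :
    IsWord 1 (L.rotate r) ↔ ∀ m < L.length, height L r ≤ height L (r + m) := by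
  rw [isWord_iff_prefix_sums, List.length_rotate, (L.rotate_perm r).sum_eq, and_iff_left hL]
  refine forall₂_congr fun m hm => ?_
  have := sum_take_rotate hr hm.le
  simp only [height]
  omega

theorem existsUnique_rotate_isWord_one {L : List ℕ} (hL : L.length = L.sum + 1) :
    ∃! r, r < L.length ∧ IsWord 1 (L.rotate r) := by
  set k := L.length with hk
  have hperiod : ∀ n ≤ k, height L (n + k) = height L n - 1 := fun n hn => by
    rw [hk, height_add_length hn, ← hk, hL]
    push_cast
    ring
  obtain ⟨r₀, hr₀, hmin⟩ := exists_min_image (range k) (height L) ⟨0, by simp; omega⟩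
  rw [mem_range] at hr₀
  -- the good rotation starts at the first minimum of `height` over one period
  have hex : ∃ n, n < k ∧ height L n ≤ height L r₀ := ⟨r₀, hr₀, le_rfl⟩
  obtain ⟨hr, hr₀⟩ := Nat.find_spec hex
  have hgood : IsWord 1 (L.rotate (Nat.find hex)) := by
    rw [isWord_one_rotate_iff hL hr.le]
    intro m hm
    rcases lt_or_ge (Nat.find hex + m) k with h | h
    · exact hr₀.trans (hmin _ (mem_range.2 h))
    · have hn := Nat.find_min hex (m := Nat.find hex + m - k) (by omega)
      rw [show Nat.find hex + m = (Nat.find hex + m - k) + k by omega, hperiod _ (by omega)]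
      omega
  have hle : ∀ r r', r < k → r' < k → IsWord 1 (L.rotate r) → IsWord 1 (L.rotate r') → r ≤ r' := by
    intro r r' hr hr' h h'
    rw [isWord_one_rotate_iff hL hr.le] at h
    rw [isWord_one_rotate_iff hL hr'.le] at h'
    by_contra hlt
    have h₁ := h' (r - r') (by omega)
    have h₂ := h (r' + k - r) (by omega)
    rw [show r' + (r - r') = r by omega] at h₁
    rw [show r + (r' + k - r) = r' + k by omega, hperiod r' hr'.le] at h₂
    omega
  exact ⟨Nat.find hex, ⟨hr, hgood⟩, fun r ⟨hr', h⟩ =>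
    le_antisymm (hle _ _ hr' hr h hgood) (hle _ _ hr hr' hgood h)⟩

open Classical in
def words (j : ℕ) (μ : ℕ →₀ ℕ) : Finset (List ℕ) := (arrangements μ).filter (IsWord j)

@[simp]
lemma mem_words {j : ℕ} {μ : ℕ →₀ ℕ} {L : List ℕ} : L ∈ words j μ ↔ content L = μ ∧ IsWord j L := by
  simp [words]

lemma words_eq_empty {j : ℕ} {μ : ℕ →₀ ℕ} (hμ : μ.degree ≠ weight id μ + j) : words j μ = ∅ := by
  refine eq_empty_of_forall_notMem fun L hL => hμ ?_
  obtain ⟨rfl, h⟩ := mem_words.1 hL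
  rw [degree_content, weight_content, h.length_eq]

lemma card_arrangements_eq_card_words_one_mul {μ : ℕ →₀ ℕ} (hμ : μ.degree = weight id μ + 1) :
    #(arrangements μ) = μ.degree * #(words 1 μ) := by
  classical
  have hlen : ∀ L ∈ arrangements μ, L.length = μ.degree ∧ L.length = L.sum + 1 := fun L hL => by
    obtain rfl := mem_arrangements.1 hL
    rw [degree_content, weight_content] at hμ
    exact ⟨(degree_content L).symm, hμ⟩
  have hrotations : ∀ L ∈ arrangements μ,
      #((range μ.degree).bipartiteAbove (fun L r => IsWord 1 (L.rotate r)) L) = 1 := by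
    intro L hL
    obtain ⟨r, ⟨hr, h⟩, huniq⟩ := existsUnique_rotate_isWord_one (hlen L hL).2
    rw [card_eq_one]
    refine ⟨r, eq_singleton_iff_unique_mem.2 ⟨?_, fun r' hr' => huniq r' ?_⟩⟩ <;>
      simp_all [mem_bipartiteAbove]
  have hrotated : ∀ r ∈ range μ.degree,
      #((arrangements μ).bipartiteBelow (fun L r => IsWord 1 (L.rotate r)) r) = #(words 1 μ) := by
    intro r hr
    rw [mem_range] at hr
    have hround : ∀ L ∈ arrangements μ, ∀ a b, a + b = μ.degree → (L.rotate a).rotate b = L :=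
      fun L hL a b hab => by rw [List.rotate_rotate, hab, ← (hlen L hL).1, List.rotate_length]
    refine card_nbij' (·.rotate r) (·.rotate (μ.degree - r)) ?_ ?_ ?_ ?_
    · intro L hL
      simp_all [content_rotate]
    · intro L hL
      rw [mem_coe, mem_words] at hL
      rw [mem_coe, mem_bipartiteBelow, mem_arrangements, content_rotate,
        hround L (mem_arrangements.2 hL.1) _ _ (by omega)]
      exact hL
    · intro L hL
      exact hround L ((mem_bipartiteBelow _).1 hL).1 _ _ (by omega)
    · intro L hL
      exact hround L (mem_arrangements.2 (mem_words.1 hL).1) _ _ (by omega)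
  simpa using card_mul_eq_card_mul _ hrotations hrotated

def series (j : ℕ) : MvPowerSeries ℕ ℂ := fun μ =>
  ∑ L ∈ words j μ, (L.map fun a => ((a.factorial : ℂ))⁻¹).prod

lemma coeff_series (j : ℕ) (μ : ℕ →₀ ℕ) :
    coeff μ (series j) = ∑ L ∈ words j μ, (L.map fun a => ((a.factorial : ℂ))⁻¹).prod :=
  rfl

lemma series_zero : series 0 = 1 := by
  classical
  ext μ
  rw [coeff_series, coeff_one]
  split_ifs with hμ
  · have : words 0 μ = {[]} := by
      ext L
      rw [mem_words, isWord_zero_iff, hμ, mem_singleton]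
      exact ⟨And.right, fun h => ⟨h ▸ content_nil, h⟩⟩
    simp [this]
  · refine sum_eq_zero fun L hL => absurd ?_ hμ
    obtain ⟨rfl, h⟩ := mem_words.1 hL
    simp [isWord_zero_iff.1 h]

lemma series_add (i j : ℕ) : series (i + j) = series i * series j := by
  ext μ
  simp_rw [coeff_mul, coeff_series, sum_mul_sum, ← sum_product', sum_sigma']
  refine (sum_bij (fun x _ => x.2.1 ++ x.2.2) ?_ ?_ ?_ ?_).symm
  · rintro ⟨⟨ν, ρ⟩, L₁, L₂⟩ hx
    simp only [mem_sigma, mem_product, HasAntidiagonal.mem_antidiagonal, mem_words] at hx ⊢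
    obtain ⟨rfl, ⟨rfl, h₁⟩, ⟨rfl, h₂⟩⟩ := hx
    exact ⟨content_append L₁ L₂, h₁.append h₂⟩
  · rintro ⟨⟨ν, ρ⟩, L₁, L₂⟩ hx ⟨⟨ν', ρ'⟩, L₁', L₂'⟩ hx' heq
    simp only [mem_sigma, mem_product, HasAntidiagonal.mem_antidiagonal, mem_words] at hx hx'
    obtain ⟨rfl, rfl⟩ := hx.2.1.2.append_inj hx'.2.1.2 heq
    obtain ⟨-, ⟨rfl, -⟩, ⟨rfl, -⟩⟩ := hx
    obtain ⟨-, ⟨rfl, -⟩, ⟨rfl, -⟩⟩ := hx'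
    rfl
  · intro L hL
    rw [mem_words] at hL
    obtain ⟨L₁, L₂, h₁, h₂, rfl⟩ := hL.2.exists_append
    refine ⟨⟨(content L₁, content L₂), L₁, L₂⟩, ?_, rfl⟩
    simp only [mem_sigma, mem_product, HasAntidiagonal.mem_antidiagonal, mem_words, true_and]
    exact ⟨(content_append L₁ L₂).symm.trans hL.1, h₁, h₂⟩
  · intro x _
    rw [List.map_append, List.prod_append]

lemma series_one_pow (j : ℕ) : series 1 ^ j = series j := by
  induction j with
  | zero => rw [pow_zero, series_zero]
  | succ j ih => rw [pow_succ, ih, series_add]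

lemma words_succ_eq_biUnion (j : ℕ) (μ : ℕ →₀ ℕ) :
    words (j + 1) μ =
      μ.support.biUnion fun a => (words (a + j) (μ - single a 1)).image (List.cons a) := by
  ext (_ | ⟨a, L⟩)
  · simp [isWord_nil_iff]
  · simp only [mem_words, content_cons_eq_iff, isWord_succ_cons_iff, mem_biUnion, mem_image,
      List.cons.injEq]
    exact ⟨fun ⟨⟨ha, hL⟩, h⟩ => ⟨a, ha, L, ⟨hL, h⟩, rfl, rfl⟩, fun ⟨_, hb, _, hL, hba, hL'⟩ =>
      hba ▸ hL' ▸ ⟨⟨hb, hL.1⟩, hL.2⟩⟩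

lemma coeff_series_succ (j : ℕ) (μ : ℕ →₀ ℕ) :
    coeff μ (series (j + 1)) =
      ∑ a ∈ μ.support, ((a.factorial : ℂ))⁻¹ *
        coeff μ (X a * series (a + j)) := by
  rw [coeff_series, words_succ_eq_biUnion, sum_biUnion (pairwiseDisjoint_image_cons _ _)]
  refine sum_congr rfl fun a ha => ?_
  rw [sum_image fun _ _ _ _ h => List.cons_injective h, coeff_X_mul,
    if_pos (single_le_iff.2 (Nat.one_le_iff_ne_zero.2 (mem_support_iff.1 ha))), coeff_series,
    Finset.mul_sum]
  simp only [List.map_cons, List.prod_cons]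

lemma coeff_series_eq_card_mul (j : ℕ) (μ : ℕ →₀ ℕ) :
    coeff μ (series j) =
      #(words j μ) * μ.prod fun i n => ((i.factorial : ℂ))⁻¹ ^ n := by
  rw [coeff_series, sum_congr rfl fun L hL => ?_, sum_const, nsmul_eq_mul]
  rw [← (mem_words.1 hL).1, prod_content_pow]

theorem vtop_eq_series_one : vtop = series 1 := by
  ext μ
  have hdeg : (μ.sum fun _ n => n) = μ.degree := rfl
  have hwt : (μ.sum fun i n => i * n) = weight id μ := by
    rw [weight_apply]
    exact Finsupp.sum_congr fun i _ => mul_comm _ _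
  rw [coeff_series_eq_card_mul]
  change vtop μ = _
  simp only [vtop, hdeg, hwt]
  by_cases hμ : μ.degree = weight id μ + 1
  · rw [if_pos ⟨by omega, by omega⟩]
    have hcount : #(words 1 μ) * (μ.prod fun _ n => n.factorial) = (μ.degree - 1).factorial := by
      have h := card_arrangements_mul_prod_factorial μ
      rw [card_arrangements_eq_card_words_one_mul hμ, mul_assoc,
        ← Nat.mul_factorial_pred (by omega : μ.degree ≠ 0)] at h
      exact Nat.eq_of_mul_eq_mul_left (by omega) h
    rw [← hcount]
    simp only [Finsupp.prod, Nat.cast_mul, Nat.cast_prod, prod_mul_distrib, inv_pow,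
      prod_inv_distrib]
    have h₁ : ∏ i ∈ μ.support, ((μ i).factorial : ℂ) ≠ 0 :=
      Finset.prod_ne_zero_iff.2 fun i _ => Nat.cast_ne_zero.2 (μ i).factorial_ne_zero
    have h₂ : ∏ i ∈ μ.support, (i.factorial : ℂ) ^ μ i ≠ 0 :=
      Finset.prod_ne_zero_iff.2 fun i _ => pow_ne_zero _ (Nat.cast_ne_zero.2 i.factorial_ne_zero)
    field_simp
  · rw [if_neg (by omega), words_eq_empty hμ, card_empty, Nat.cast_zero, zero_mul]

end Lukasiewicz

open Lukasiewicz MvPowerSeries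

theorem hasSum_coeff_vtop (μ : ℕ →₀ ℕ) :
    HasSum (fun a => ((a.factorial : ℂ))⁻¹ * coeff μ (X a * vtop ^ a)) (coeff μ vtop) := by
  simp only [vtop_eq_series_one, series_one_pow]
  rw [show series 1 = series (0 + 1) from rfl, coeff_series_succ]
  refine hasSum_sum_of_ne_finset_zero fun a ha => ?_
  rw [Finsupp.notMem_support_iff, ← Nat.lt_one_iff, ← not_le, ← Finsupp.single_le_iff] at ha
  rw [coeff_X_mul, if_neg ha, mul_zero]

/-- The topological solution satisfies the genus-zero Euler–Lagrange equation
`t_0 + Σ_{p≥1} (t_p − δ_{p,1}) (v^top)^p / p! = 0` (coefficientwise, the sum over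
`p` being a sum of complex numbers). -/
theorem vtop_euler_lagrange :
    ∀ μ : ℕ →₀ ℕ,
      MvPowerSeries.coeff μ (MvPowerSeries.X 0 : MvPowerSeries ℕ ℂ) +
        ∑' p : ℕ,
          MvPowerSeries.coeff μ
            ((((p + 1).factorial : ℂ))⁻¹ •
              ((MvPowerSeries.X (p + 1) - if p = 0 then 1 else 0) * vtop ^ (p + 1))) = 0 := by
  intro μ
  have hshift := (hasSum_nat_add_iff' 1).2 (hasSum_coeff_vtop μ)
  have hsum := hshift.sub (hasSum_ite_eq 0 (coeff μ vtop))
  simp only [Finset.sum_range_one, Nat.factorial_zero, Nat.cast_one, inv_one, pow_zero, mul_one,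
    one_mul] at hsum
  rw [tsum_congr fun p => ?_, hsum.tsum_eq]
  · ring
  · split_ifs with hp <;> simp [hp, sub_mul]
end
end

section
/- Let v(t) be the topological solution of the Riemann hierarchy (initial data v(x,0,0,…) = x). Then for all k_1,…,k_N ≥ 0 with N ≥ 1, the mixed derivative satisfies ∂_{t_{k_1}}⋯∂_{t_{k_N}} v = ∂_x^N ( v^{k_1+⋯+k_N+1} / (k_1!⋯k_N!·(k_1+⋯+k_N+1)) ), where ∂_x = ∂_{t_0}. -/
noncomputable section
open scoped BigOperators

/-!
The coefficient of `t^m` in `v^a` is `a (n-1)! / ∏ᵢ mᵢ! (i!)^{mᵢ}` when `n = ∑ mᵢ = a + ∑ i mᵢ`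
(Lagrange inversion for the string equation `v = ∑ₖ tₖ vᵏ / k!`). We check this closed form
directly: it satisfies `V_{a+1} = ∑ₖ tₖ V_{a+k} / k!` coefficientwise, which together with
`V₀ = 1` forces `V_a V_b = V_{a+b}` by well-founded induction on the exponent `m`. With the closed
form, `∂_{t_j} v^{a+1} = (a+1)/((a+j+1) j!) ∂ₓ v^{a+j+1}` is a comparison of coefficients, and
applying it for `k_N, …, k_1` in turn, commuting each `∂_{t_k}` past the `∂ₓ`'s already produced,
gives the theorem.
-/

open MvPowerSeries Finsupp Finset.HasAntidiagonal
open scoped Nat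

lemma MvPowerSeries.coeff_X_mul_of_ne_zero {σ R : Type*} [CommSemiring R] {m : σ →₀ ℕ} {k : σ}
    (h : m k ≠ 0) (f : MvPowerSeries σ R) :
    coeff m (X k * f) = coeff (m - single k 1) f := by
  rw [X, coeff_monomial_mul, if_pos (single_le_iff.2 (Nat.one_le_iff_ne_zero.2 h)), one_mul]

lemma MvPowerSeries.coeff_X_mul_of_eq_zero {σ R : Type*} [CommSemiring R] {m : σ →₀ ℕ} {k : σ}
    (h : m k = 0) (f : MvPowerSeries σ R) : coeff m (X k * f) = 0 := by
  rw [X, coeff_monomial_mul, if_neg (by simp [single_le_iff, h])]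

lemma Finsupp.sub_single_one_lt {σ : Type*} {m : σ →₀ ℕ} {k : σ} (h : m k ≠ 0) :
    m - single k 1 < m := by
  refine lt_of_le_of_ne tsub_le_self fun he => ?_
  have := congrArg (· k) he
  simp only [tsub_apply, single_eq_same] at this
  omega

lemma Finsupp.degree_sub_single_one_add {σ : Type*} {m : σ →₀ ℕ} {k : σ} (h : m k ≠ 0) :
    degree (m - single k 1) + 1 = degree m := by
  conv_rhs => rw [← sub_add_single_one_cancel h, map_add, degree_single]

def vtopDenom (m : ℕ →₀ ℕ) : ℂ := m.prod fun i n => (n ! : ℂ) * (i ! : ℂ) ^ n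

lemma vtopDenom_ne_zero (m : ℕ →₀ ℕ) : vtopDenom m ≠ 0 :=
  Finset.prod_ne_zero_iff.2 fun _ _ =>
    mul_ne_zero (Nat.cast_ne_zero.2 (Nat.factorial_ne_zero _))
      (pow_ne_zero _ (Nat.cast_ne_zero.2 (Nat.factorial_ne_zero _)))

lemma vtopDenom_add_single (m : ℕ →₀ ℕ) (k : ℕ) :
    vtopDenom (m + single k 1) = (m k + 1) * k ! * vtopDenom m := by
  have h := mul_prod_erase' (m + single k 1) k (fun i n => (n ! : ℂ) * (i ! : ℂ) ^ n) (by simp)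
  rw [vtopDenom, ← h, vtopDenom, ← mul_prod_erase' m k _ (by simp)]
  have herase : (m + single k 1).erase k = m.erase k := by
    ext i
    rcases eq_or_ne i k with rfl | hik
    · simp
    · simp [erase_ne hik]
  simp only [herase, Finsupp.add_apply, single_eq_same, Nat.factorial_succ, pow_succ]
  push_cast
  ring

lemma vtopDenom_single_one (i : ℕ) : vtopDenom (single i 1) = i ! := by
  simp [vtopDenom, prod_single_index]

lemma vtopDenom_sub_single (m : ℕ →₀ ℕ) {k : ℕ} (h : m k ≠ 0) :
    vtopDenom m = m k * k ! * vtopDenom (m - single k 1) := by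
  conv_lhs => rw [← sub_add_single_one_cancel h]
  rw [vtopDenom_add_single, tsub_apply, single_eq_same, Nat.cast_sub (Nat.one_le_iff_ne_zero.2 h)]
  ring

def vtopPow : ℕ → MvPowerSeries ℕ ℂ
  | 0 => 1
  | a + 1 => fun m => if weight id m + (a + 1) = degree m then
      (a + 1) * ((degree m - 1)! : ℂ) / vtopDenom m else 0

lemma coeff_vtopPow_succ (a : ℕ) (m : ℕ →₀ ℕ) :
    coeff m (vtopPow (a + 1)) = if weight id m + (a + 1) = degree m then
      (a + 1) * ((degree m - 1)! : ℂ) / vtopDenom m else 0 := rfl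

lemma coeff_zero_vtopPow (a : ℕ) : coeff 0 (vtopPow a) = if a = 0 then 1 else 0 := by
  cases a with
  | zero => simp [vtopPow]
  | succ a => simp [coeff_vtopPow_succ]

lemma coeff_vtopPow_of_ne_zero {m : ℕ →₀ ℕ} (hm : m ≠ 0) (a : ℕ) :
    coeff m (vtopPow a) = if weight id m + a = degree m then
      a * ((degree m - 1)! : ℂ) / vtopDenom m else 0 := by
  cases a with
  | zero => simp [vtopPow, coeff_one, hm]
  | succ a => rw [coeff_vtopPow_succ]; push_cast; rfl

lemma inv_factorial_mul_coeff_vtopPow_sub_single {m : ℕ →₀ ℕ} {k : ℕ} (hk : m k ≠ 0)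
    (hm : 2 ≤ degree m) (a : ℕ) :
    (k ! : ℂ)⁻¹ * coeff (m - single k 1) (vtopPow (a + k)) =
      if weight id m + (a + 1) = degree m then
        (a + k) * m k * ((degree m - 2)! : ℂ) / vtopDenom m else 0 := by
  have hdeg := degree_sub_single_one_add hk
  have hwt : weight id (m - single k 1) + k = weight id m := weight_sub_single_add hk
  have hne : m - single k 1 ≠ 0 := by
    rintro h
    rw [h, map_zero] at hdeg
    omega
  rw [coeff_vtopPow_of_ne_zero hne]
  by_cases hC : weight id m + (a + 1) = degree m
  · rw [if_pos (by omega), if_pos hC, vtopDenom_sub_single m hk,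
      show degree (m - single k 1) - 1 = degree m - 2 by omega]
    have := vtopDenom_ne_zero (m - single k 1)
    have : (m k : ℂ) ≠ 0 := Nat.cast_ne_zero.2 hk
    field_simp
    push_cast
    ring
  · rw [if_neg (by omega), if_neg hC, mul_zero]

/-- The hodograph equation `v^{a+1} = ∑ₖ tₖ vᵃ⁺ᵏ / k!`, coefficientwise. -/
theorem coeff_vtopPow_succ_eq_sum (a : ℕ) (m : ℕ →₀ ℕ) :
    coeff m (vtopPow (a + 1)) = ∑ k ∈ m.support, (k ! : ℂ)⁻¹ * coeff m (X k * vtopPow (a + k)) := by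
  rw [Finset.sum_congr rfl fun k hk => by rw [coeff_X_mul_of_ne_zero (mem_support_iff.1 hk)]]
  obtain h | h | h : degree m = 0 ∨ degree m = 1 ∨ 2 ≤ degree m := by omega
  · rw [(degree_eq_zero_iff m).1 h]
    simp [coeff_vtopPow_succ]
  · obtain ⟨i, rfl⟩ := (sum_eq_one_iff m).1 h
    rw [support_single _ one_ne_zero, Finset.sum_singleton, tsub_self, coeff_zero_vtopPow,
      coeff_vtopPow_succ, vtopDenom_single_one, weight_single, degree_single]
    rcases i with _ | i <;> rcases a with _ | a <;> simp
    omega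
  · rw [Finset.sum_congr rfl fun k hk =>
      inv_factorial_mul_coeff_vtopPow_sub_single (mem_support_iff.1 hk) h a]
    by_cases hC : weight id m + (a + 1) = degree m
    · simp only [coeff_vtopPow_succ, if_pos hC]
      rw [← Finset.sum_div, ← Finset.sum_mul]
      have hsum : ∑ k ∈ m.support, ((a : ℂ) + k) * m k =
          a * degree m + (weight (id : ℕ → ℕ) m : ℂ) := by
        simp [degree_apply, weight_apply, Finsupp.sum, add_mul, Finset.sum_add_distrib,
          Finset.mul_sum, mul_comm]
      obtain ⟨p, hp⟩ : ∃ p, degree m = p + 2 := ⟨degree m - 2, by omega⟩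
      have hC' : (weight (id : ℕ → ℕ) m : ℂ) + (a + 1) = p + 2 := by exact_mod_cast hp ▸ hC
      rw [hsum, hp, show p + 2 - 1 = p + 1 by omega, show p + 2 - 2 = p by omega,
        Nat.factorial_succ]
      push_cast
      linear_combination (-(p ! : ℂ) / vtopDenom m) * hC'
    · simp [hC, coeff_vtopPow_succ]

lemma coeff_vtopPow_succ_eq_sum_of_subset (a : ℕ) {m : ℕ →₀ ℕ} {s : Finset ℕ}
    (hs : m.support ⊆ s) :
    coeff m (vtopPow (a + 1)) = ∑ k ∈ s, (k ! : ℂ)⁻¹ * coeff m (X k * vtopPow (a + k)) := by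
  rw [coeff_vtopPow_succ_eq_sum]
  refine Finset.sum_subset hs fun k _ hk => ?_
  rw [coeff_X_mul_of_eq_zero (notMem_support_iff.1 hk), mul_zero]

theorem vtopPow_mul (a b : ℕ) : vtopPow a * vtopPow b = vtopPow (a + b) := by
  ext m
  induction m using WellFoundedLT.induction generalizing a b with
  | _ m ih =>
  rcases a with _ | a
  · rw [vtopPow, one_mul, zero_add]
  have hsupp : ∀ p ∈ antidiagonal m, p.1.support ⊆ m.support := fun p hp =>
    support_mono (mem_antidiagonal.1 hp ▸ le_self_add)
  calc coeff m (vtopPow (a + 1) * vtopPow b)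
      = ∑ p ∈ antidiagonal m, ∑ k ∈ m.support,
          (k ! : ℂ)⁻¹ * (coeff p.1 (X k * vtopPow (a + k)) * coeff p.2 (vtopPow b)) := by
        rw [coeff_mul]
        refine Finset.sum_congr rfl fun p hp => ?_
        rw [coeff_vtopPow_succ_eq_sum_of_subset a (hsupp p hp), Finset.sum_mul]
        simp only [mul_assoc]
    _ = ∑ k ∈ m.support, (k ! : ℂ)⁻¹ * coeff m (X k * (vtopPow (a + k) * vtopPow b)) := by
        rw [Finset.sum_comm]
        simp only [← Finset.mul_sum, ← coeff_mul, mul_assoc]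
    _ = ∑ k ∈ m.support, (k ! : ℂ)⁻¹ * coeff m (X k * vtopPow (a + b + k)) := by
        refine Finset.sum_congr rfl fun k hk => ?_
        have hk := mem_support_iff.1 hk
        rw [coeff_X_mul_of_ne_zero hk, coeff_X_mul_of_ne_zero hk,
          ih _ (sub_single_one_lt hk), add_right_comm]
    _ = coeff m (vtopPow (a + 1 + b)) := by
        rw [add_right_comm, coeff_vtopPow_succ_eq_sum]

lemma weight_id_eq_sum (m : ℕ →₀ ℕ) : weight id m = m.sum fun i n => i * n :=
  Finset.sum_congr rfl fun _ _ => mul_comm _ _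

lemma vtop_eq_vtopPow_one : vtop = vtopPow 1 := by
  ext m
  change (if 1 ≤ degree m ∧ (m.sum fun i n => i * n) + 1 = degree m then
      ((degree m - 1)! : ℂ) / vtopDenom m else 0) = coeff m (vtopPow (0 + 1))
  rw [coeff_vtopPow_succ, ← weight_id_eq_sum]
  by_cases h : weight id m + 1 = degree m
  · rw [if_pos ⟨by omega, h⟩, if_pos (by omega)]
    push_cast
    ring
  · rw [if_neg fun h' => h h'.2, if_neg (by omega)]

theorem vtop_pow (a : ℕ) : vtop ^ a = vtopPow a := by
  induction a with
  | zero => rfl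
  | succ a ih => rw [pow_succ, ih, vtop_eq_vtopPow_one, vtopPow_mul]

lemma coeff_pd (i : ℕ) (f : MvPowerSeries ℕ ℂ) (m : ℕ →₀ ℕ) :
    coeff m (pd i f) = (m i + 1) * coeff (m + single i 1) f := rfl

lemma pd_smul (i : ℕ) (c : ℂ) (f : MvPowerSeries ℕ ℂ) : pd i (c • f) = c • pd i f := by
  ext m
  rw [map_smul, coeff_pd, coeff_pd, map_smul, smul_eq_mul, smul_eq_mul, mul_left_comm]

lemma pd_comm (i j : ℕ) (f : MvPowerSeries ℕ ℂ) : pd i (pd j f) = pd j (pd i f) := by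
  rcases eq_or_ne i j with rfl | hij
  · rfl
  ext m
  simp only [coeff_pd, Finsupp.add_apply, single_eq_of_ne hij, single_eq_of_ne hij.symm,
    add_zero, add_right_comm m]
  ring

lemma pd_iterate_smul (i n : ℕ) (c : ℂ) (f : MvPowerSeries ℕ ℂ) :
    (pd i)^[n] (c • f) = c • (pd i)^[n] f :=
  Function.Commute.iterate_left (g := (c • ·)) (pd_smul i c) n f

lemma pd_iterate_comm (i j n : ℕ) (f : MvPowerSeries ℕ ℂ) :
    pd i ((pd j)^[n] f) = (pd j)^[n] (pd i f) :=
  Function.Commute.iterate_right (pd_comm i j) n f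

lemma coeff_pd_vtopPow_succ (j a : ℕ) (m : ℕ →₀ ℕ) :
    coeff m (pd j (vtopPow (a + 1))) = if weight id m + j + a = degree m then
      (a + 1) * ((degree m)! : ℂ) / (j ! * vtopDenom m) else 0 := by
  rw [coeff_pd, coeff_vtopPow_succ, vtopDenom_add_single, map_add, map_add, weight_single,
    degree_single, smul_eq_mul, id, one_mul, Nat.add_sub_cancel]
  by_cases hC : weight id m + j + a = degree m
  · rw [if_pos (by omega), if_pos hC]
    have := vtopDenom_ne_zero m
    have : (m j : ℂ) + 1 ≠ 0 := Nat.cast_add_one_ne_zero _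
    field_simp
  · rw [if_neg (by omega), if_neg hC, mul_zero]

lemma pd_vtopPow_succ (j a : ℕ) :
    pd j (vtopPow (a + 1)) =
      ((a + 1) / ((a + j + 1) * j !) : ℂ) • pd 0 (vtopPow (a + j + 1)) := by
  ext m
  rw [map_smul, coeff_pd_vtopPow_succ, coeff_pd_vtopPow_succ, add_zero, smul_eq_mul]
  by_cases hC : weight id m + j + a = degree m
  · rw [if_pos hC, if_pos (by omega)]
    have := vtopDenom_ne_zero m
    have : (a + j + 1 : ℂ) ≠ 0 := by exact_mod_cast (a + j).succ_ne_zero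
    field_simp
    push_cast
    ring
  · rw [if_neg hC, if_neg (by omega), mul_zero]

/-- The Riemann hierarchy for the powers of `v`. -/
theorem pd_vtop_pow_succ (j a : ℕ) :
    pd j (vtop ^ (a + 1)) =
      ((a + 1) / ((a + j + 1) * j !) : ℂ) • pd 0 (vtop ^ (a + j + 1)) := by
  rw [vtop_pow, vtop_pow, pd_vtopPow_succ]

theorem vtop_mixed_derivatives_general (l : List ℕ) :
    List.foldr pd vtop l =
      ((((l.map Nat.factorial).prod * (l.sum + 1) : ℕ) : ℂ))⁻¹ •
        (pd 0)^[l.length] (vtop ^ (l.sum + 1)) := by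
  induction l with
  | nil => simp
  | cons k l ih =>
    rw [List.foldr_cons, ih, pd_smul, pd_iterate_comm, pd_vtop_pow_succ, pd_iterate_smul, smul_smul,
      ← Function.iterate_succ_apply, List.sum_cons, add_comm k, List.length_cons]
    congr 1
    have hP : (l.map Nat.factorial).prod ≠ 0 := List.prod_ne_zero (by simp [Nat.factorial_ne_zero])
    simp only [List.map_cons, List.prod_cons]
    generalize (l.map Nat.factorial).prod = P at hP ⊢
    generalize l.sum = s
    have : (P : ℂ) ≠ 0 := Nat.cast_ne_zero.2 hP
    have : (s + 1 : ℂ) ≠ 0 := Nat.cast_add_one_ne_zero s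
    have : (s + k + 1 : ℂ) ≠ 0 := by norm_cast
    push_cast
    field_simp

/-- For the topological solution `v` of the Riemann hierarchy and any `k_1,…,k_N ≥ 0`
(`N ≥ 1`), `∂_{t_{k_1}}⋯∂_{t_{k_N}} v = ∂_x^N ( v^{k_1+⋯+k_N+1}/(k_1!⋯k_N!(k_1+⋯+k_N+1)) )`. -/
theorem vtop_mixed_derivatives (l : List ℕ) (hl : l ≠ []) :
    List.foldr pd vtop l =
      ((((l.map Nat.factorial).prod * (l.sum + 1) : ℕ) : ℂ))⁻¹ •
        (pd 0)^[l.length] (vtop ^ (l.sum + 1)) :=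
  vtop_mixed_derivatives_general l
end
end
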